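/- Monotone step inequality: for all k, n ≥ 1, F(k + n, n) ≥ F(k, n) + 1, where F is the optimal worst-case number of guesses in Clear Mastermind with n positions and the given number of colors. -/

import Mathlib

attribute [local instance] Classical.propDecidable

namespace CM

/-- Wordle-style feedback symbols: Green, Yellow, Black. -/
inductive Fbk | G | Y | B
deriving DecidableEq

variable {k n : ℕ}

/-- The multiset of values of the answer `y` at positions not exactly matched
by the guess `x`. -/
def misses (x y : Fin n → Fin k) : Multiset (Fin k) :=
  (Finset.univ.filter (fun i => x i ≠ y i)).val.map y

/-- The multiset of still-unmatched answer values after greedily processing the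
first `j` positions of the guess left to right. -/
def fbState (x y : Fin n → Fin k) : ℕ → Multiset (Fin k)
  | 0 => misses x y
  | j + 1 =>
    if h : j < n then
      if x ⟨j, h⟩ = y ⟨j, h⟩ then fbState x y j
      else if x ⟨j, h⟩ ∈ fbState x y j then (fbState x y j).erase (x ⟨j, h⟩)
      else fbState x y j
    else fbState x y j

/-- Wordle-style feedback: `G` for an exact match, otherwise `Y` if the guessed
value occurs among the remaining unmatched values of the answer (consumed
greedily left to right), and `B` otherwise. -/
def feedback (x y : Fin n → Fin k) (i : Fin n) : Fbk :=
  if x i = y i then Fbk.G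
  else if x i ∈ fbState x y i.val then Fbk.Y
  else Fbk.B

/-- A codebreaker strategy: the next guess as a function of the feedback
received so far. -/
def Strategy (k n : ℕ) : Type :=
  List (Fin n → Fbk) → (Fin n → Fin k)

/-- The feedback history after `r` rounds of playing strategy `S` against
secret `y`. -/
def hist (S : Strategy k n) (y : Fin n → Fin k) : ℕ → List (Fin n → Fbk)
  | 0 => []
  | r + 1 => hist S y r ++ [feedback (S (hist S y r)) y]

/-- The guess made by strategy `S` in round `r` (0-indexed) against secret `y`. -/
def guess (S : Strategy k n) (y : Fin n → Fin k) (r : ℕ) : Fin n → Fin k :=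
  S (hist S y r)

/-- `S` wins within `m` rounds: against every secret, one of the first `m`
guesses equals the secret. -/
def WinsIn (S : Strategy k n) (m : ℕ) : Prop :=
  ∀ y : Fin n → Fin k, ∃ r < m, guess S y r = y

/-- `F k n`: the least `m` such that some codebreaker strategy wins the Clear
Mastermind game with `k` colors and `n` positions within `m` rounds. -/
noncomputable def F (k n : ℕ) : ℕ :=
  sInf {m | ∃ S : Strategy k n, WinsIn S m}

end CM

/-!
The first guess of a strategy for `k + n` colours uses at most `n` colours, so some `k` colours
avoid it, and every secret written in those colours answers the first guess with all `B`.
A strategy for the `k` colours simulates the remaining rounds: it plays the guess `x` of the big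
strategy read back in the small palette (foreign colours replaced arbitrarily), and the feedback
that `x` would have received against the embedded secret is a function of `x` and the feedback
actually received. The only subtlety is the greedy yellow accounting: at a foreign position the
small guess may match or consume a secret colour that stays unmatched in the big game;
`extraMisses` records exactly these colours.
-/

namespace CM

open Function

variable {k K n : ℕ}

lemma hist_length (S : Strategy k n) (y : Fin n → Fin k) (r : ℕ) :
    (hist S y r).length = r := by
  induction r with
  | zero => rfl
  | succ r ih => simp [hist, ih]

lemma fbState_le_misses (x y : Fin n → Fin k) (j : ℕ) : fbState x y j ≤ misses x y := by
  induction j with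
  | zero => exact le_rfl
  | succ j ih =>
    rw [fbState]
    split_ifs
    all_goals first | exact ih | exact (Multiset.erase_le _ _).trans ih

lemma feedback_eq_G_iff (x y : Fin n → Fin k) (i : Fin n) :
    feedback x y i = .G ↔ x i = y i := by
  unfold feedback; split_ifs <;> simp_all

lemma feedback_eq_Y_iff (x y : Fin n → Fin k) (i : Fin n) :
    feedback x y i = .Y ↔ x i ≠ y i ∧ x i ∈ fbState x y i := by
  unfold feedback; split_ifs <;> simp_all

lemma fbState_succ (x y : Fin n → Fin k) {j : ℕ} (h : j < n) :
    fbState x y (j + 1) =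
      if feedback x y ⟨j, h⟩ = .Y then (fbState x y j).erase (x ⟨j, h⟩) else fbState x y j := by
  rw [fbState, dif_pos h]
  simp only [feedback_eq_Y_iff]
  split_ifs <;> simp_all

lemma fbState_succ_of_le (x y : Fin n → Fin k) {j : ℕ} (h : n ≤ j) :
    fbState x y (j + 1) = fbState x y j := by
  rw [fbState, dif_neg h.not_gt]

lemma feedback_eq_B_of_disjoint {x y : Fin n → Fin k} (h : ∀ i j, x i ≠ y j) :
    feedback x y = fun _ => .B := by
  funext i
  have hmiss : x i ∉ misses x y := by
    simp only [misses, Multiset.mem_map, not_exists, not_and]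
    exact fun j _ => (h i j).symm
  rw [feedback, if_neg (h i i),
    if_neg fun hmem => hmiss (Multiset.mem_of_le (fbState_le_misses x y i) hmem)]

noncomputable section Translation

variable [Nonempty (Fin k)] (e : Fin k → Fin K) (x : Fin n → Fin K) (f : Fin n → Fbk)

def translateAt (c : Multiset (Fin k)) (i : Fin n) : Fbk :=
  if x i ∈ Set.range e then
    if f i = .G then .G else if f i = .Y ∨ invFun e (x i) ∈ c then .Y else .B
  else .B

def extraMissesStep (c : Multiset (Fin k)) (i : Fin n) : Multiset (Fin k) :=
  let c' := if f i = .Y then invFun e (x i) ::ₘ c else c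
  if translateAt e x f c i = .Y then c'.erase (invFun e (x i)) else c'

def extraMisses : ℕ → Multiset (Fin k)
  | 0 => (Finset.univ.filter fun i => x i ∉ Set.range e ∧ f i = .G).val.map (invFun e ∘ x)
  | j + 1 => if h : j < n then extraMissesStep e x f (extraMisses j) ⟨j, h⟩ else extraMisses j

def translate (i : Fin n) : Fbk :=
  translateAt e x f (extraMisses e x f i) i

variable {e x f} in
lemma translateAt_eq_Y {c : Multiset (Fin k)} {i : Fin n} (h : translateAt e x f c i = .Y) :
    x i ∈ Set.range e ∧ (f i = .Y ∨ invFun e (x i) ∈ c) := by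
  unfold translateAt at h
  split_ifs at h; simp_all

variable {e x f} in
lemma add_extraMissesStep (s c : Multiset (Fin k)) (i : Fin n)
    (hs : f i = .Y → invFun e (x i) ∈ s) :
    (if translateAt e x f c i = .Y then (s + c).erase (invFun e (x i)) else s + c) =
      (if f i = .Y then s.erase (invFun e (x i)) else s) + extraMissesStep e x f c i := by
  unfold extraMissesStep
  dsimp only
  split_ifs with ht hY hY
  · rw [Multiset.erase_cons_head, Multiset.erase_add_left_pos _ (hs hY)]
  · rw [Multiset.erase_add_right_pos _ ((translateAt_eq_Y ht).2.resolve_left hY)]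
  · rw [Multiset.add_cons, ← Multiset.cons_add, Multiset.cons_erase (hs hY)]
  · rfl

variable {e} (he : Injective e) (y : Fin n → Fin k)
include he

lemma misses_comp :
    misses x (e ∘ y) =
      (misses (invFun e ∘ x) y + extraMisses e x (feedback (invFun e ∘ x) y) 0).map e := by
  have hout :
      (Finset.univ.filter fun i => x i ∉ Set.range e ∧ feedback (invFun e ∘ x) y i = .G).val.map
        (invFun e ∘ x) =
      (Finset.univ.filter fun i => x i ∉ Set.range e ∧ invFun e (x i) = y i).val.map y :=
    Multiset.map_congr (by simp only [feedback_eq_G_iff, comp_apply]) fun i hi => by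
      simp only [Finset.mem_val, Finset.mem_filter] at hi
      exact hi.2.2
  unfold misses extraMisses
  rw [hout, ← Multiset.map_add, Multiset.map_map]
  congr 1
  simp only [Finset.filter_val]
  rw [Multiset.filter_add_filter, (Multiset.filter_eq_nil (p := fun i =>
      (invFun e ∘ x) i ≠ y i ∧ x i ∉ Set.range e ∧ invFun e (x i) = y i)).2
      fun i _ h => h.1 h.2.2, add_zero]
  refine Multiset.filter_congr fun i _ => ?_
  by_cases hr : x i ∈ Set.range e
  · obtain ⟨a, ha⟩ := hr
    simp [← ha, leftInverse_invFun he a, he.eq_iff]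
  · have hne : x i ≠ e (y i) := fun h => hr ⟨y i, h.symm⟩
    simp [hr, hne, em']

lemma feedback_comp_apply_eq_translateAt {c : Multiset (Fin k)} {i : Fin n}
    (hc : fbState x (e ∘ y) i = (fbState (invFun e ∘ x) y i + c).map e) :
    feedback x (e ∘ y) i = translateAt e x (feedback (invFun e ∘ x) y) c i := by
  unfold translateAt feedback
  rw [hc]
  by_cases hr : x i ∈ Set.range e
  · obtain ⟨a, ha⟩ := hr
    have hinv : (invFun e ∘ x) i = a := by rw [comp_apply, ← ha, leftInverse_invFun he a]
    simp only [hinv, ← ha, Set.mem_range_self, if_true, comp_apply, he.eq_iff,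
      Multiset.mem_map_of_injective he, Multiset.mem_add]
    by_cases hG : a = y i
    · simp [hG]
    · split_ifs <;> simp_all
  · have hne : x i ≠ (e ∘ y) i := fun h => hr ⟨y i, h.symm⟩
    have hnmem : x i ∉ (fbState (invFun e ∘ x) y i + c).map e := fun h => by
      obtain ⟨a, -, ha⟩ := Multiset.mem_map.1 h
      exact hr ⟨a, ha⟩
    rw [if_neg hr, if_neg hne, if_neg hnmem]

lemma fbState_comp (j : ℕ) :
    fbState x (e ∘ y) j =
      (fbState (invFun e ∘ x) y j + extraMisses e x (feedback (invFun e ∘ x) y) j).map e := by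
  induction j with
  | zero => exact misses_comp x he y
  | succ j ih =>
    by_cases hj : j < n
    · have hfb := feedback_comp_apply_eq_translateAt x he y (i := ⟨j, hj⟩) ih
      have hY := fun h => ((feedback_eq_Y_iff (invFun e ∘ x) y ⟨j, hj⟩).1 h).2
      rw [fbState_succ _ _ hj, fbState_succ _ _ hj, extraMisses, dif_pos hj, hfb, ih]
      simp only [comp_apply]
      rw [← add_extraMissesStep (fbState (invFun e ∘ x) y j) _ _ hY]
      split_ifs with ht
      · rw [Multiset.map_erase e he, invFun_eq (translateAt_eq_Y ht).1]
      · rfl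
    · rw [fbState_succ_of_le _ _ (not_lt.1 hj), fbState_succ_of_le _ _ (not_lt.1 hj), extraMisses,
        dif_neg hj, ih]

lemma feedback_comp : feedback x (e ∘ y) = translate e x (feedback (invFun e ∘ x) y) :=
  funext fun i => feedback_comp_apply_eq_translateAt x he y (fbState_comp x he y i)

end Translation

section Simulation

variable (S : Strategy K n) (p : (Fin n → Fin K) → Fin n → Fin k)
  (Φ : (Fin n → Fin K) → (Fin n → Fbk) → Fin n → Fbk) (f₀ : Fin n → Fbk)

def liftHist (h : List (Fin n → Fbk)) : List (Fin n → Fbk) :=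
  h.foldl (fun bh f => bh ++ [Φ (S bh) f]) [f₀]

def simulate : Strategy k n := fun h => p (S (liftHist S Φ f₀ h))

variable {S p Φ f₀} {ι : (Fin n → Fin k) → Fin n → Fin K}

lemma liftHist_append (h : List (Fin n → Fbk)) (f : Fin n → Fbk) :
    liftHist S Φ f₀ (h ++ [f]) = liftHist S Φ f₀ h ++ [Φ (S (liftHist S Φ f₀ h)) f] := by
  simp [liftHist, List.foldl_append]

lemma liftHist_hist (hΦ : ∀ x y, feedback x (ι y) = Φ x (feedback (p x) y))
    (h₀ : ∀ y, feedback (S []) (ι y) = f₀) (y : Fin n → Fin k) (r : ℕ) :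
    liftHist S Φ f₀ (hist (simulate S p Φ f₀) y r) = hist S (ι y) (r + 1) := by
  induction r with
  | zero => simp [liftHist, hist, h₀]
  | succ r ih =>
    rw [hist.eq_2 (simulate S p Φ f₀), liftHist_append, ih, hist.eq_2 S (ι y) (r + 1), simulate,
      ih, hΦ]

lemma winsIn_simulate (hΦ : ∀ x y, feedback x (ι y) = Φ x (feedback (p x) y))
    (h₀ : ∀ y, feedback (S []) (ι y) = f₀) (hp : ∀ y, p (ι y) = y) (hS₀ : ∀ y, S [] ≠ ι y)
    {m : ℕ} (hS : WinsIn S (m + 1)) : WinsIn (simulate S p Φ f₀) m := by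
  intro y
  obtain ⟨r, hr, hwin⟩ := hS (ι y)
  cases r with
  | zero => exact absurd hwin (hS₀ y)
  | succ r =>
    refine ⟨r, by omega, ?_⟩
    change p (S (liftHist S Φ f₀ (hist _ y r))) = y
    rw [liftHist_hist hΦ h₀]
    exact (congrArg p hwin).trans (hp y)

end Simulation

lemma F_le_of_winsIn {S : Strategy k n} {m : ℕ} (hS : WinsIn S m) : F k n ≤ m :=
  Nat.sInf_le ⟨S, hS⟩

lemma exists_winsIn [Nonempty (Fin k)] : ∃ m, ∃ S : Strategy k n, WinsIn S m := by
  let E := Fintype.equivFin (Fin n → Fin k)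
  let S : Strategy k n := fun h =>
    if hl : h.length < Fintype.card (Fin n → Fin k) then E.symm ⟨h.length, hl⟩
    else Classical.arbitrary _
  refine ⟨_, S, fun y => ⟨E y, (E y).isLt, ?_⟩⟩
  have hlen := hist_length S y (E y)
  change S (hist S y (E y)) = y
  generalize hist S y (E y) = h at hlen
  simp only [S, hlen, (E y).isLt, dif_pos, Fin.eta, Equiv.symm_apply_apply]

lemma exists_winsIn_F [Nonempty (Fin k)] : ∃ S : Strategy k n, WinsIn S (F k n) :=
  Nat.sInf_mem exists_winsIn

lemma not_winsIn_zero [Nonempty (Fin k)] (S : Strategy k n) : ¬ WinsIn S 0 := fun hS => by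
  obtain ⟨r, hr, -⟩ := hS (Classical.arbitrary _)
  exact Nat.not_lt_zero r hr

lemma exists_embedding_forall_ne {α : Type*} [Fintype α] (x : Fin n → α)
    (h : k + n ≤ Fintype.card α) : ∃ e : Fin k ↪ α, ∀ a i, e a ≠ x i := by
  set s := (Finset.univ.image x)ᶜ
  have hs : k ≤ Fintype.card s := by
    have := Finset.card_image_le (s := Finset.univ) (f := x)
    rw [Fintype.card_coe, Finset.card_compl, Finset.card_univ, Fintype.card_fin] at *
    omega
  obtain ⟨f⟩ := Embedding.nonempty_of_card_le (α := Fin k) (β := s) (by rwa [Fintype.card_fin])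
  refine ⟨f.trans (Embedding.subtype _), fun a i hai => ?_⟩
  have := (f a).2
  simp_all [s]

end CM

/-- Monotone step inequality: `F(k + n, n) ≥ F(k, n) + 1`. -/
theorem stmt18 (k n : ℕ) (hk : 1 ≤ k) (hn : 1 ≤ n) :
    CM.F k n + 1 ≤ CM.F (k + n) n := by
  have : Nonempty (Fin k) := ⟨⟨0, hk⟩⟩
  have : Nonempty (Fin (k + n)) := ⟨⟨0, by omega⟩⟩
  obtain ⟨S, hS⟩ := CM.exists_winsIn_F (k := k + n) (n := n)
  obtain ⟨m, hm⟩ := Nat.exists_eq_succ_of_ne_zero fun h => CM.not_winsIn_zero S (h ▸ hS)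
  obtain ⟨e, he⟩ := CM.exists_embedding_forall_ne (k := k) (S []) (by simp)
  have hT := CM.winsIn_simulate (ι := (e ∘ ·)) (p := (Function.invFun e ∘ ·))
    (Φ := CM.translate e) (fun x y => CM.feedback_comp x e.injective y)
    (fun y => CM.feedback_eq_B_of_disjoint fun i j => (he (y j) i).symm)
    (fun y => funext fun i => Function.leftInverse_invFun e.injective (y i))
    (fun y h => he (y ⟨0, hn⟩) ⟨0, hn⟩ (congrFun h _).symm) (hm ▸ hS)
  have := CM.F_le_of_winsIn hT
  omega
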